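/- arXiv:2303.10392 — 2 statements merged into one kernel-verified Lean document; each statement's English description precedes it below -/
import Mathlib

section
/- If B, C are positive semidefinite bounded linear operators on a complex Hilbert space H, then w([[0, B],[C, 0]]) = (1/2)‖B + C‖. -/
/-!
Writing `x = (x₀, x₁)`, one has `⟪T x, x⟫ = ⟪B x₁, x₀⟫ + ⟪C x₀, x₁⟫`. Factoring a positive
operator as `P = S⋆S` gives `2 ‖⟪P u, v⟫‖ = 2 ‖⟪S u, S v⟫‖ ≤ ⟪P u, u⟫ + ⟪P v, v⟫`, so for a unit
vector `‖⟪T x, x⟫‖ ≤ (⟪(B + C) x₀, x₀⟫ + ⟪(B + C) x₁, x₁⟫) / 2 ≤ ‖B + C‖ / 2`. Conversely, on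
the diagonal vectors `(u, u)` the form of `T` is that of `B + C`, and the numerical radius of the
self-adjoint operator `B + C` is its norm.
-/

/-- The numerical radius of a bounded linear operator on a complex Hilbert space:
`w(T) = sup {|⟨Tx, x⟩| : ‖x‖ = 1}`. -/
noncomputable def numRad {H : Type*} [NormedAddCommGroup H] [InnerProductSpace ℂ H]
    (T : H →L[ℂ] H) : ℝ :=
  sSup {r : ℝ | ∃ x : H, ‖x‖ = 1 ∧ r = ‖(inner ℂ (T x) x : ℂ)‖}

/-- The absolute value `|T| = (T*T)^{1/2}` of a bounded operator. -/
noncomputable def absOp {H : Type*} [NormedAddCommGroup H] [InnerProductSpace ℂ H]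
    [CompleteSpace H] (T : H →L[ℂ] H) : H →L[ℂ] H :=
  CFC.sqrt (ContinuousLinearMap.adjoint T * T)

/-- The numerical radius of a complex `n × n` matrix. -/
noncomputable def numRadMat {n : ℕ} (M : Matrix (Fin n) (Fin n) ℂ) : ℝ :=
  numRad (Matrix.toEuclideanCLM (𝕜 := ℂ) M)

open ContinuousLinearMap RCLike

section NumRad

variable {E : Type*} [NormedAddCommGroup E] [InnerProductSpace ℂ E] (T : E →L[ℂ] E)

lemma numRad_nonneg : 0 ≤ numRad T :=
  Real.sSup_nonneg (by rintro _ ⟨x, -, rfl⟩; exact norm_nonneg _)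

lemma norm_inner_apply_self_le (x : E) : ‖inner ℂ (T x) x‖ ≤ ‖T‖ * ‖x‖ ^ 2 :=
  calc ‖inner ℂ (T x) x‖ ≤ ‖T x‖ * ‖x‖ := norm_inner_le_norm _ _
    _ ≤ ‖T‖ * ‖x‖ * ‖x‖ := by gcongr; exact T.le_opNorm x
    _ = ‖T‖ * ‖x‖ ^ 2 := by ring

lemma norm_inner_le_numRad {x : E} (hx : ‖x‖ = 1) : ‖inner ℂ (T x) x‖ ≤ numRad T := by
  refine le_csSup ⟨‖T‖, ?_⟩ ⟨x, hx, rfl⟩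
  rintro _ ⟨y, hy, rfl⟩
  simpa [hy] using norm_inner_apply_self_le T y

lemma norm_inner_le_numRad_mul_sq (x : E) : ‖inner ℂ (T x) x‖ ≤ numRad T * ‖x‖ ^ 2 := by
  rcases eq_or_ne x 0 with rfl | hx
  · simp
  set u : E := (‖x‖⁻¹ : ℂ) • x
  have hxu : x = (‖x‖ : ℂ) • u := by simp [u, smul_smul, hx]
  have hu := norm_inner_le_numRad T (norm_smul_inv_norm (𝕜 := ℂ) hx)
  calc ‖inner ℂ (T x) x‖ = ‖x‖ ^ 2 * ‖inner ℂ (T u) u‖ := by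
        conv_lhs => rw [hxu]
        simp [sq, mul_assoc]
    _ ≤ numRad T * ‖x‖ ^ 2 := by rw [mul_comm]; gcongr; exact hu

lemma numRad_le {M : ℝ} (hM : 0 ≤ M) (h : ∀ x : E, ‖x‖ = 1 → ‖inner ℂ (T x) x‖ ≤ M) :
    numRad T ≤ M :=
  Real.sSup_le (by rintro _ ⟨x, hx, rfl⟩; exact h x hx) hM

lemma LinearMap.IsSymmetric.norm_le_numRad {A : E →L[ℂ] E} (hA : A.IsSymmetric) :
    ‖A‖ ≤ numRad A := by
  rw [A.norm_eq_iSup_rayleighQuotient hA]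
  refine ciSup_le fun x => ?_
  rw [rayleighQuotient, reApplyInnerSelf_apply, abs_div, abs_sq]
  exact div_le_of_le_mul₀ (sq_nonneg _) (numRad_nonneg A)
    ((abs_re_le_norm _).trans (norm_inner_le_numRad_mul_sq A x))

end NumRad

lemma ContinuousLinearMap.IsPositive.two_mul_norm_inner_le {H : Type*} [NormedAddCommGroup H]
    [InnerProductSpace ℂ H] [CompleteSpace H] {P : H →L[ℂ] H} (hP : P.IsPositive) (u v : H) :
    2 * ‖inner ℂ (P u) v‖ ≤ re (inner ℂ (P u) u) + re (inner ℂ (P v) v) := by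
  obtain ⟨S, rfl⟩ :=
    CStarAlgebra.nonneg_iff_eq_star_mul_self.mp ((nonneg_iff_isPositive P).mpr hP)
  have h (x y : H) : inner ℂ ((star S * S) x) y = inner ℂ (S x) (S y) :=
    adjoint_inner_left S y (S x)
  simp only [h, inner_self_eq_norm_sq]
  nlinarith [norm_inner_le_norm (𝕜 := ℂ) (S u) (S v), sq_nonneg (‖S u‖ - ‖S v‖)]

section OffDiagonal

variable {H : Type*} [NormedAddCommGroup H] [InnerProductSpace ℂ H]
  {B C : H →L[ℂ] H} {T : PiLp 2 (fun _ : Fin 2 => H) →L[ℂ] PiLp 2 (fun _ : Fin 2 => H)}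

lemma inner_apply_self_of_offDiag (hT : ∀ x, T x 0 = B (x 1) ∧ T x 1 = C (x 0))
    (x : PiLp 2 (fun _ : Fin 2 => H)) :
    inner ℂ (T x) x = inner ℂ (B (x 1)) (x 0) + inner ℂ (C (x 0)) (x 1) := by
  rw [PiLp.inner_apply, Fin.sum_univ_two, (hT x).1, (hT x).2]

lemma norm_add_le_two_mul_numRad_of_offDiag (hBC : (B + C).IsSymmetric)
    (hT : ∀ x, T x 0 = B (x 1) ∧ T x 1 = C (x 0)) : ‖B + C‖ ≤ 2 * numRad T := by
  refine hBC.norm_le_numRad.trans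
    (numRad_le _ (mul_nonneg zero_le_two (numRad_nonneg T)) fun u hu => ?_)
  set x : PiLp 2 (fun _ : Fin 2 => H) := WithLp.toLp 2 fun _ => u
  have hx : ‖x‖ ^ 2 = 2 := by
    rw [PiLp.norm_sq_eq_of_L2, Fin.sum_univ_two]
    norm_num [x, hu]
  have key := norm_inner_le_numRad_mul_sq T x
  rwa [inner_apply_self_of_offDiag hT, hx, ← inner_add_left, ← add_apply, mul_comm] at key

lemma numRad_le_half_norm_add_of_offDiag [CompleteSpace H] (hB : B.IsPositive)
    (hC : C.IsPositive)
    (hT : ∀ x, T x 0 = B (x 1) ∧ T x 1 = C (x 0)) : numRad T ≤ 1 / 2 * ‖B + C‖ := by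
  refine numRad_le _ (by positivity) fun x hx => ?_
  have hx2 : ‖x 0‖ ^ 2 + ‖x 1‖ ^ 2 = 1 := by
    rw [← Fin.sum_univ_two (fun i => ‖x i‖ ^ 2), ← PiLp.norm_sq_eq_of_L2, hx, one_pow]
  have hB01 := hB.two_mul_norm_inner_le (x 1) (x 0)
  have hC01 := hC.two_mul_norm_inner_le (x 0) (x 1)
  have hBC (i : Fin 2) :
      re (inner ℂ (B (x i)) (x i)) + re (inner ℂ (C (x i)) (x i)) ≤ ‖B + C‖ * ‖x i‖ ^ 2 := by
    rw [← map_add, ← inner_add_left, ← add_apply]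
    exact (re_le_norm _).trans (norm_inner_apply_self_le (B + C) _)
  calc ‖inner ℂ (T x) x‖
      ≤ ‖inner ℂ (B (x 1)) (x 0)‖ + ‖inner ℂ (C (x 0)) (x 1)‖ := by
        rw [inner_apply_self_of_offDiag hT]; exact norm_add_le _ _
    _ ≤ (‖B + C‖ * ‖x 0‖ ^ 2 + ‖B + C‖ * ‖x 1‖ ^ 2) / 2 := by linarith [hBC 0, hBC 1]
    _ = 1 / 2 * ‖B + C‖ := by rw [← mul_add, hx2]; ring

end OffDiagonal

open ContinuousLinearMap
theorem stmt13 {H : Type*} [NormedAddCommGroup H] [InnerProductSpace ℂ H] [CompleteSpace H]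
    (B C : H →L[ℂ] H) (hB : B.IsPositive) (hC : C.IsPositive)
    (T : PiLp 2 (fun _ : Fin 2 => H) →L[ℂ] PiLp 2 (fun _ : Fin 2 => H))
    (hT : ∀ x : PiLp 2 (fun _ : Fin 2 => H), T x 0 = B (x 1) ∧ T x 1 = C (x 0)) :
    numRad T = (1 / 2) * ‖B + C‖ := by
  have := norm_add_le_two_mul_numRad_of_offDiag (hB.add hC).isSymmetric hT
  exact le_antisymm (numRad_le_half_norm_add_of_offDiag hB hC hT) (by linarith)
end

section
/- For bounded linear operators A, B, C, D on a complex Hilbert space H, w(AB ± CD) ≤ (1/4)(‖|A| + |B*|‖ · ‖|B| + |A*|‖ + ‖|C| + |D*|‖ · ‖|D| + |C*|‖). -/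
/-!
Write `z = ⟪(A * B) x, x⟫ = ⟪B x, A† x⟫` and rotate `B` by a unimodular scalar `c` so that
`re ⟪A† x, c B x⟫ = |z|`. Then `4|z| ≤ ‖(A† + c B) x‖²`, and Kittaneh's inequality
`‖X + Y‖² ≤ ‖|X| + |Y|‖ ‖|X*| + |Y*|‖` applied to `X = A†`, `Y = c B` gives
`4|z| ≤ ‖|A| + |B*|‖ ‖|B| + |A*|‖` for unit `x`; the triangle inequality handles `AB ± CD`.

Kittaneh's inequality follows from the mixed Schwarz inequality
`|⟪T x, y⟫|² ≤ ⟪|T| x, x⟫ ⟪|T*| y, y⟫`, which we prove without polar decomposition: with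
`b = T T*` and `D = (|T*| + δ)^{1/2}`, one has `⟪T x, y⟫ = ⟪D⁻¹ T x, D y⟫`, and
`T* (|T*| + δ)⁻¹ T = T* T (|T| + δ)⁻¹ ≤ |T|` because `T` intertwines every continuous function of
`T* T` with the same function of `T T*`. Letting `δ → 0` finishes.
-/

open Polynomial Filter Topology
open scoped InnerProductSpace

section Intertwining

theorem SemiconjBy.aeval {R A : Type*} [CommSemiring R] [Semiring A] [Algebra R A] {x a b : A}
    (h : SemiconjBy x a b) (p : R[X]) :
    SemiconjBy x (Polynomial.aeval a p) (Polynomial.aeval b p) := by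
  induction p using Polynomial.induction_on with
  | C c =>
    simp only [aeval_C]
    exact (Algebra.commutes c x).symm
  | add p q hp hq => simpa only [map_add] using hp.add_right hq
  | monomial n c ih =>
    simp only [map_mul, map_pow, aeval_C, aeval_X, pow_succ, ← mul_assoc] at ih ⊢
    exact ih.mul_right h

variable {A : Type*} [Ring A] [StarRing A] [TopologicalSpace A] [IsTopologicalRing A] [T2Space A]
  [Algebra ℝ A] [ContinuousFunctionalCalculus ℝ A IsSelfAdjoint]

theorem SemiconjBy.cfc {x a b : A} (h : SemiconjBy x a b) (ha : IsSelfAdjoint a)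
    (hb : IsSelfAdjoint b) {f : ℝ → ℝ} (hf : Continuous f) :
    SemiconjBy x (cfc f a) (cfc f b) := by
  obtain ⟨r, hr⟩ := ((ContinuousFunctionalCalculus.isCompact_spectrum (R := ℝ) a).union
    (ContinuousFunctionalCalculus.isCompact_spectrum (R := ℝ) b)).isBounded.subset_closedBall 0
  rw [Real.closedBall_eq_Icc, zero_sub, zero_add, Set.union_subset_iff] at hr
  have hpoly (n : ℕ) : ∃ p : ℝ[X], ∀ t ∈ Set.Icc (-r) r, |p.eval t - f t| < 1 / (n + 1) :=
    exists_polynomial_near_of_continuousOn _ _ f hf.continuousOn _ Nat.one_div_pos_of_nat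
  choose p hp using hpoly
  have hunif : TendstoUniformlyOn (fun n t ↦ (p n).eval t) f atTop (Set.Icc (-r) r) := by
    refine Metric.tendstoUniformlyOn_iff.mpr fun ε hε ↦ ?_
    obtain ⟨N, hN⟩ := exists_nat_one_div_lt hε
    filter_upwards [eventually_ge_atTop N] with n hn t ht
    rw [Real.dist_eq, abs_sub_comm]
    refine (hp n t ht).trans_le (hN.le.trans' ?_)
    gcongr
  have hlim {c : A} (hc : IsSelfAdjoint c) (hcr : spectrum ℝ c ⊆ Set.Icc (-r) r) :
      Tendsto (fun n ↦ Polynomial.aeval c (p n)) atTop (𝓝 (_root_.cfc f c)) := by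
    simp_rw [← cfc_polynomial _ c]
    exact tendsto_cfc_fun (hunif.mono hcr) (.of_forall fun n ↦ (p n).continuousOn)
  refine tendsto_nhds_unique ((hlim ha hr.1).const_mul x) ?_
  simp_rw [(h.aeval _).eq]
  exact (hlim hb hr.2).mul_const x

end Intertwining

theorem add_sq_le_add_mul_add {a b p q r s : ℝ} (hp : 0 ≤ p) (hq : 0 ≤ q) (hr : 0 ≤ r)
    (hs : 0 ≤ s) (ha : a ^ 2 ≤ p * q) (hb : b ^ 2 ≤ r * s) : (a + b) ^ 2 ≤ (p + r) * (q + s) := by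
  have hab : (2 * a * b) ^ 2 ≤ (p * s + r * q) ^ 2 := by
    nlinarith [mul_le_mul ha hb (sq_nonneg b) (mul_nonneg hp hq), sq_nonneg (p * s - r * q)]
  nlinarith [(abs_le_of_sq_le_sq' hab (by positivity)).2]

theorem numRad_le_s15 {H : Type*} [NormedAddCommGroup H] [InnerProductSpace ℂ H] {T : H →L[ℂ] H}
    {c : ℝ} (hc : 0 ≤ c) (h : ∀ x : H, ‖x‖ = 1 → ‖⟪T x, x⟫_ℂ‖ ≤ c) : numRad T ≤ c :=
  Real.sSup_le (by rintro r ⟨x, hx, rfl⟩; exact h x hx) hc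

namespace ContinuousLinearMap

variable {H : Type*} [NormedAddCommGroup H] [InnerProductSpace ℂ H]

theorem reApplyInnerSelf_mono {P Q : H →L[ℂ] H} (h : P ≤ Q) (x : H) :
    P.reApplyInnerSelf x ≤ Q.reApplyInnerSelf x := by
  have := ((le_def P Q).mp h).re_inner_nonneg_left x
  rwa [sub_apply, inner_sub_left, map_sub, sub_nonneg] at this

theorem reApplyInnerSelf_add_algebraMap (P : H →L[ℂ] H) (δ : ℝ) (x : H) :
    (P + algebraMap ℝ _ δ).reApplyInnerSelf x = P.reApplyInnerSelf x + δ * ‖x‖ ^ 2 := by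
  rw [reApplyInnerSelf_apply, reApplyInnerSelf_apply, add_apply, inner_add_left, map_add,
    Algebra.algebraMap_eq_smul_one, smul_apply, one_apply_eq_self, ← Complex.coe_smul,
    inner_smul_left, Complex.conj_ofReal, ← inner_self_eq_norm_sq (𝕜 := ℂ)]
  exact congrArg _ (Complex.re_ofReal_mul _ _)

theorem reApplyInnerSelf_add (P Q : H →L[ℂ] H) (x : H) :
    (P + Q).reApplyInnerSelf x = P.reApplyInnerSelf x + Q.reApplyInnerSelf x := by
  rw [reApplyInnerSelf_apply, reApplyInnerSelf_apply, reApplyInnerSelf_apply, add_apply,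
    inner_add_left, map_add]

theorem reApplyInnerSelf_le_norm_mul_sq (P : H →L[ℂ] H) (x : H) :
    P.reApplyInnerSelf x ≤ ‖P‖ * ‖x‖ ^ 2 :=
  calc P.reApplyInnerSelf x ≤ ‖⟪P x, x⟫_ℂ‖ := RCLike.re_le_norm _
    _ ≤ ‖P x‖ * ‖x‖ := norm_inner_le_norm _ _
    _ ≤ ‖P‖ * ‖x‖ * ‖x‖ := by gcongr; exact le_opNorm _ _
    _ = ‖P‖ * ‖x‖ ^ 2 := by ring

variable [CompleteSpace H]

theorem absOp_eq_cfcAbs (T : H →L[ℂ] H) : absOp T = CFC.abs T := rfl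

theorem absOp_eq_cfc_sqrt (T : H →L[ℂ] H) : absOp T = cfc Real.sqrt (adjoint T * T) :=
  (CFC.sqrt_eq_real_sqrt _ (star_mul_self_nonneg T)).trans cfcₙ_eq_cfc

theorem absOp_adjoint_eq_cfc_sqrt (T : H →L[ℂ] H) :
    absOp (adjoint T) = cfc Real.sqrt (T * adjoint T) := by
  rw [absOp_eq_cfc_sqrt, adjoint_adjoint]

theorem reApplyInnerSelf_absOp_nonneg (T : H →L[ℂ] H) (x : H) :
    0 ≤ (absOp T).reApplyInnerSelf x := by
  have h : 0 ≤ absOp T := CFC.abs_nonneg T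
  exact ((nonneg_iff_isPositive _).mp h).re_inner_nonneg_left x

theorem norm_apply_sq (S : H →L[ℂ] H) (x : H) :
    ‖S x‖ ^ 2 = (adjoint S * S).reApplyInnerSelf x :=
  apply_norm_sq_eq_inner_adjoint_left S x

theorem reApplyInnerSelf_adjoint_mul_mul (P S : H →L[ℂ] H) (x : H) :
    (adjoint S * P * S).reApplyInnerSelf x = P.reApplyInnerSelf (S x) := by
  rw [reApplyInnerSelf_apply, reApplyInnerSelf_apply, mul_apply_eq_comp, mul_apply_eq_comp,
    adjoint_inner_left]

theorem adjoint_mul_cfc_inv_sqrt_add_mul_le_absOp (T : H →L[ℂ] H) {δ : ℝ} (hδ : 0 < δ) :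
    adjoint T * cfc (fun t ↦ (√t + δ)⁻¹) (T * adjoint T) * T ≤ absOp T := by
  have hpos (t : ℝ) : 0 < √t + δ := by positivity
  have hcont : Continuous fun t ↦ (√t + δ)⁻¹ :=
    (by fun_prop : Continuous fun t ↦ √t + δ).inv₀ fun t ↦ (hpos t).ne'
  set a := adjoint T * T
  have ha : IsSelfAdjoint a := .star_mul_self T
  have hsemi : SemiconjBy T a (T * adjoint T) := (mul_assoc _ _ _).symm
  have hmul : a * cfc (fun t ↦ (√t + δ)⁻¹) a = cfc (fun t ↦ t * (√t + δ)⁻¹) a := by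
    rw [cfc_mul _ _ a (by fun_prop) hcont.continuousOn, cfc_id' ℝ a]
  rw [mul_assoc, ← (hsemi.cfc ha (.mul_star_self T) hcont).eq, ← mul_assoc,
    hmul, absOp_eq_cfc_sqrt]
  refine cfc_mono (fun t _ ↦ ?_) (continuous_id.mul hcont).continuousOn (by fun_prop)
  rcases le_or_gt 0 t with ht | ht
  · rw [mul_inv_le_iff₀ (hpos t)]
    nlinarith [Real.mul_self_sqrt ht, Real.sqrt_nonneg t]
  · rw [Real.sqrt_eq_zero'.mpr ht.le]
    exact mul_nonpos_of_nonpos_of_nonneg ht.le (by positivity)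

theorem norm_inner_sq_le_absOp_add (T : H →L[ℂ] H) (x y : H) {δ : ℝ} (hδ : 0 < δ) :
    ‖⟪T x, y⟫_ℂ‖ ^ 2 ≤
      (absOp T).reApplyInnerSelf x * ((absOp (adjoint T)).reApplyInnerSelf y + δ * ‖y‖ ^ 2) := by
  set b := T * adjoint T
  have hb : IsSelfAdjoint b := .mul_star_self T
  have hpos (t : ℝ) : 0 < √(√t + δ) := Real.sqrt_pos.mpr (by positivity)
  have hD_cont : Continuous fun t ↦ √(√t + δ) := by fun_prop
  have hC_cont : Continuous fun t ↦ (√(√t + δ))⁻¹ := hD_cont.inv₀ fun t ↦ (hpos t).ne'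
  set C := cfc (fun t ↦ (√(√t + δ))⁻¹) b
  set D := cfc (fun t ↦ √(√t + δ)) b
  have hC : adjoint C = C := (cfc_predicate _ b : IsSelfAdjoint C)
  have hD : adjoint D = D := (cfc_predicate _ b : IsSelfAdjoint D)
  have hCD : C * D = 1 := by
    rw [← cfc_mul _ _ b hC_cont.continuousOn hD_cont.continuousOn, ← cfc_one ℝ b]
    exact cfc_congr fun t _ ↦ inv_mul_cancel₀ (hpos t).ne'
  have hCC : C * C = cfc (fun t ↦ (√t + δ)⁻¹) b := by
    rw [← cfc_mul _ _ b hC_cont.continuousOn hC_cont.continuousOn]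
    exact cfc_congr fun t _ ↦ by rw [← mul_inv, Real.mul_self_sqrt (by positivity)]
  have hDD : D * D = absOp (adjoint T) + algebraMap ℝ _ δ := by
    rw [absOp_adjoint_eq_cfc_sqrt, ← cfc_add_const .., ← cfc_mul ..]
    exact cfc_congr fun t _ ↦ Real.mul_self_sqrt (by positivity)
  have hCTx : ‖C (T x)‖ ^ 2 ≤ (absOp T).reApplyInnerSelf x := by
    rw [norm_apply_sq, hC, ← reApplyInnerSelf_adjoint_mul_mul, hCC]
    exact reApplyInnerSelf_mono (adjoint_mul_cfc_inv_sqrt_add_mul_le_absOp T hδ) x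
  have hDy : ‖D y‖ ^ 2 = (absOp (adjoint T)).reApplyInnerSelf y + δ * ‖y‖ ^ 2 := by
    rw [norm_apply_sq, hD, hDD, reApplyInnerSelf_add_algebraMap]
  calc ‖⟪T x, y⟫_ℂ‖ ^ 2 = ‖⟪C (T x), D y⟫_ℂ‖ ^ 2 := by
        rw [← hC, adjoint_inner_left, ← mul_apply_eq_comp, hCD, one_apply_eq_self]
    _ ≤ ‖C (T x)‖ ^ 2 * ‖D y‖ ^ 2 := by
        rw [← mul_pow]
        gcongr
        exact norm_inner_le_norm _ _
    _ ≤ _ := by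
        rw [← hDy]
        gcongr

theorem norm_inner_sq_le_absOp (T : H →L[ℂ] H) (x y : H) :
    ‖⟪T x, y⟫_ℂ‖ ^ 2 ≤ (absOp T).reApplyInnerSelf x * (absOp (adjoint T)).reApplyInnerSelf y := by
  have hcont : Continuous fun δ : ℝ ↦ (absOp T).reApplyInnerSelf x *
      ((absOp (adjoint T)).reApplyInnerSelf y + δ * ‖y‖ ^ 2) := by fun_prop
  refine ge_of_tendsto (x := 𝓝[>] (0 : ℝ)) ?_
    (eventually_nhdsWithin_of_forall fun δ hδ ↦ norm_inner_sq_le_absOp_add T x y hδ)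
  simpa using (hcont.tendsto 0).mono_left nhdsWithin_le_nhds

theorem norm_add_apply_sq_le (X Y : H →L[ℂ] H) (x : H) :
    ‖(X + Y) x‖ ^ 2 ≤
      ‖absOp X + absOp Y‖ * ‖absOp (adjoint X) + absOp (adjoint Y)‖ * ‖x‖ ^ 2 := by
  set v := (X + Y) x
  set s := ‖⟪X x, v⟫_ℂ‖ + ‖⟪Y x, v⟫_ℂ‖
  have hv : ‖v‖ ^ 2 ≤ s := by
    rw [← inner_self_eq_norm_sq (𝕜 := ℂ)]
    calc RCLike.re ⟪v, v⟫_ℂ = RCLike.re (⟪X x, v⟫_ℂ + ⟪Y x, v⟫_ℂ) := by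
          rw [← inner_add_left, ← add_apply]
      _ ≤ ‖⟪X x, v⟫_ℂ + ⟪Y x, v⟫_ℂ‖ := RCLike.re_le_norm _
      _ ≤ s := norm_add_le _ _
  have hs : s ^ 2 ≤ (absOp X + absOp Y).reApplyInnerSelf x *
      (absOp (adjoint X) + absOp (adjoint Y)).reApplyInnerSelf v := by
    rw [reApplyInnerSelf_add, reApplyInnerSelf_add]
    exact add_sq_le_add_mul_add (reApplyInnerSelf_absOp_nonneg _ _)
      (reApplyInnerSelf_absOp_nonneg _ _) (reApplyInnerSelf_absOp_nonneg _ _)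
      (reApplyInnerSelf_absOp_nonneg _ _) (norm_inner_sq_le_absOp X x v)
      (norm_inner_sq_le_absOp Y x v)
  have hq : 0 ≤ (absOp (adjoint X) + absOp (adjoint Y)).reApplyInnerSelf v := by
    rw [reApplyInnerSelf_add]
    exact add_nonneg (reApplyInnerSelf_absOp_nonneg _ _) (reApplyInnerSelf_absOp_nonneg _ _)
  have key : ‖v‖ ^ 2 * ‖v‖ ^ 2 ≤
      ‖absOp X + absOp Y‖ * ‖absOp (adjoint X) + absOp (adjoint Y)‖ * ‖x‖ ^ 2 * ‖v‖ ^ 2 :=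
    calc ‖v‖ ^ 2 * ‖v‖ ^ 2 ≤ s ^ 2 := by rw [← sq]; gcongr
      _ ≤ _ := hs
      _ ≤ ‖absOp X + absOp Y‖ * ‖x‖ ^ 2 * (‖absOp (adjoint X) + absOp (adjoint Y)‖ * ‖v‖ ^ 2) :=
          mul_le_mul (reApplyInnerSelf_le_norm_mul_sq _ x) (reApplyInnerSelf_le_norm_mul_sq _ v)
            hq (by positivity)
      _ = _ := by ring
  rcases (sq_nonneg ‖v‖).eq_or_lt with hv0 | hv0
  · rw [← hv0]
    positivity
  · exact le_of_mul_le_mul_right key hv0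

theorem four_mul_norm_inner_mul_apply_self_le (A B : H →L[ℂ] H) (x : H) :
    4 * ‖⟪(A * B) x, x⟫_ℂ‖ ≤
      ‖absOp A + absOp (adjoint B)‖ * ‖absOp B + absOp (adjoint A)‖ * ‖x‖ ^ 2 := by
  obtain ⟨c, hc, hcz⟩ := Complex.exists_norm_eq_mul_self ⟪x, (A * B) x⟫_ℂ
  have hre : RCLike.re ⟪adjoint A x, (c • B) x⟫_ℂ = ‖⟪(A * B) x, x⟫_ℂ‖ := by
    rw [smul_apply, inner_smul_right, adjoint_inner_left, ← mul_apply_eq_comp, ← hcz,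
      norm_inner_symm]
    rfl
  have habs : absOp (c • B) = absOp B := by
    rw [absOp_eq_cfcAbs, CFC.abs_smul, hc, one_smul]
    rfl
  have habs' : absOp (adjoint (c • B)) = absOp (adjoint B) := by
    rw [map_smulₛₗ, absOp_eq_cfcAbs, CFC.abs_smul, Complex.norm_conj, hc, one_smul]
    rfl
  calc 4 * ‖⟪(A * B) x, x⟫_ℂ‖ ≤ ‖(adjoint A + c • B) x‖ ^ 2 := by
        rw [add_apply, ← hre]
        linarith [norm_add_sq (𝕜 := ℂ) (adjoint A x) ((c • B) x),
          norm_sub_sq (𝕜 := ℂ) (adjoint A x) ((c • B) x), sq_nonneg ‖adjoint A x - (c • B) x‖]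
    _ ≤ _ := norm_add_apply_sq_le _ _ x
    _ = _ := by
        rw [habs, habs', adjoint_adjoint, add_comm (absOp (adjoint A)),
          mul_comm ‖absOp B + absOp (adjoint A)‖]

end ContinuousLinearMap

open ContinuousLinearMap
theorem stmt15 {H : Type*} [NormedAddCommGroup H] [InnerProductSpace ℂ H] [CompleteSpace H]
    (A B C D : H →L[ℂ] H) :
    numRad (A * B + C * D) ≤ (1 / 4) *
      (‖absOp A + absOp (adjoint B)‖ * ‖absOp B + absOp (adjoint A)‖ +
       ‖absOp C + absOp (adjoint D)‖ * ‖absOp D + absOp (adjoint C)‖) ∧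
    numRad (A * B - C * D) ≤ (1 / 4) *
      (‖absOp A + absOp (adjoint B)‖ * ‖absOp B + absOp (adjoint A)‖ +
       ‖absOp C + absOp (adjoint D)‖ * ‖absOp D + absOp (adjoint C)‖) := by
  have hbound (x : H) (hx : ‖x‖ = 1) : ‖⟪(A * B) x, x⟫_ℂ‖ + ‖⟪(C * D) x, x⟫_ℂ‖ ≤ (1 / 4) *
      (‖absOp A + absOp (adjoint B)‖ * ‖absOp B + absOp (adjoint A)‖ +
       ‖absOp C + absOp (adjoint D)‖ * ‖absOp D + absOp (adjoint C)‖) := by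
    have hAB := four_mul_norm_inner_mul_apply_self_le A B x
    have hCD := four_mul_norm_inner_mul_apply_self_le C D x
    rw [hx, one_pow, mul_one] at hAB hCD
    linarith
  refine ⟨numRad_le_s15 (by positivity) fun x hx ↦ ?_, numRad_le_s15 (by positivity) fun x hx ↦ ?_⟩
  · rw [add_apply, inner_add_left]
    exact (norm_add_le _ _).trans (hbound x hx)
  · rw [sub_apply, inner_sub_left]
    exact (norm_sub_le _ _).trans (hbound x hx)
end
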